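/- arXiv:1211.3299 — 2 statements merged into one kernel-verified Lean document; each statement's English description precedes it below -/
import Mathlib

section
/- Fix an edge e of a min-cost flow instance, fix arbitrary real costs c_{e'} for all edges e' ≠ e, and fix ε ≥ 0. Let I ⊆ [0,1] be the set of values of c_e for which the event E_ε^e occurs. Then I is contained in an interval of length at most ε. -/
/-!
Write `C f` for the cost of `f` when `c e₀` is set to `0`, so that at `c e₀ = x` the cost of `f`
is `C f + x f_{e₀}`. If the event occurs at `x` (optimal flow `f`) and at `y` (optimal flow `g`
and near-optimal flow `ĝ`), where `f` and `g` vanish on `e₀` and `ĝ_{e₀} ≥ 1`, then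
`C ĝ + y ĝ_{e₀} ≤ C g + ε ≤ C f + ε ≤ C ĝ + x ĝ_{e₀} + ε`,
so `(y - x) ĝ_{e₀} ≤ ε`. Hence the set of such values has diameter at most `ε`.
-/

open MeasureTheory

/-- A feasible integer flow: capacity constraints and budget (flow conservation)
constraints. -/
def IsFlow {V E : Type} [Fintype E] [DecidableEq V]
    (src tgt : E → V) (cap : E → ℕ) (bdg : V → ℤ) (f : E → ℤ) : Prop :=
  (∀ e, 0 ≤ f e ∧ f e ≤ (cap e : ℤ)) ∧
  ∀ v, ((∑ e, if src e = v then f e else 0) - (∑ e, if tgt e = v then f e else 0)) = bdg v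

/-- The cost `c · f` of an integer flow. -/
noncomputable def flowCost {E : Type} [Fintype E] (c : E → ℝ) (f : E → ℤ) : ℝ :=
  ∑ e, c e * (f e : ℝ)

/-- The event `E_ε^e`: there exist two different feasible integer flows `f*` and `f̂`
such that `f*` is optimal, `c·f̂ ≤ c·f* + ε`, `f*_e = 0` and `f̂_e > 0`. -/
def EventZero {V E : Type} [Fintype E] [DecidableEq V]
    (src tgt : E → V) (cap : E → ℕ) (bdg : V → ℤ) (ε : ℝ) (e : E) (c : E → ℝ) : Prop :=
  ∃ fstar fhat : E → ℤ,
    IsFlow src tgt cap bdg fstar ∧ IsFlow src tgt cap bdg fhat ∧ fstar ≠ fhat ∧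
    (∀ f, IsFlow src tgt cap bdg f → flowCost c fstar ≤ flowCost c f) ∧
    flowCost c fhat ≤ flowCost c fstar + ε ∧
    fstar e = 0 ∧ 0 < fhat e

/-- The event `E'_ε^e`: there exist two different feasible integer flows `f*` and `f̂`
such that `f*` is optimal, `c·f̂ ≤ c·f* + ε`, `f*_e = u_e` and `f̂_e < u_e`. -/
def EventCap {V E : Type} [Fintype E] [DecidableEq V]
    (src tgt : E → V) (cap : E → ℕ) (bdg : V → ℤ) (ε : ℝ) (e : E) (c : E → ℝ) : Prop :=
  ∃ fstar fhat : E → ℤ,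
    IsFlow src tgt cap bdg fstar ∧ IsFlow src tgt cap bdg fhat ∧ fstar ≠ fhat ∧
    (∀ f, IsFlow src tgt cap bdg f → flowCost c fstar ≤ flowCost c f) ∧
    flowCost c fhat ≤ flowCost c fstar + ε ∧
    fstar e = (cap e : ℤ) ∧ fhat e < (cap e : ℤ)

lemma flowCost_update {E : Type} [Fintype E] [DecidableEq E]
    (c : E → ℝ) (e₀ : E) (x : ℝ) (f : E → ℤ) :
    flowCost (Function.update c e₀ x) f = flowCost (Function.update c e₀ 0) f + x * f e₀ := by
  simp only [flowCost, Function.update_apply, ite_mul, Finset.sum_ite, Finset.filter_eq',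
    Finset.mem_univ, if_true, Finset.sum_singleton, zero_mul, Finset.sum_const_zero, zero_add,
    add_comm]

lemma EventZero.sub_le {V E : Type} [Fintype E] [DecidableEq V] [DecidableEq E]
    {src tgt : E → V} {cap : E → ℕ} {bdg : V → ℤ} {ε : ℝ} {e₀ : E} {c : E → ℝ} {x y : ℝ}
    (hε : 0 ≤ ε) (hx : EventZero src tgt cap bdg ε e₀ (Function.update c e₀ x))
    (hy : EventZero src tgt cap bdg ε e₀ (Function.update c e₀ y)) :
    y - x ≤ ε := by
  obtain ⟨f, -, hf, -, -, hf_opt, -, hf₀, -⟩ := hx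
  obtain ⟨g, ĝ, -, hĝ, -, hg_opt, hĝ_le, hg₀, hĝ₀⟩ := hy
  rcases le_or_gt y x with hyx | hxy
  · linarith
  have hg_le_f := hg_opt f hf
  have hf_le_ĝ := hf_opt ĝ hĝ
  simp only [flowCost_update _ e₀ x, flowCost_update _ e₀ y, hf₀, hg₀, Int.cast_zero,
    mul_zero, add_zero] at hĝ_le hg_le_f hf_le_ĝ
  have hĝ₀' : (1 : ℝ) ≤ ĝ e₀ := by exact_mod_cast hĝ₀
  calc y - x ≤ (y - x) * ĝ e₀ := le_mul_of_one_le_right (by linarith) hĝ₀'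
    _ ≤ ε := by linarith

theorem eventZero_interval_general
    {V E : Type} [Fintype E] [DecidableEq V] [DecidableEq E]
    (src tgt : E → V) (cap : E → ℕ) (bdg : V → ℤ)
    (ε : ℝ) (hε : 0 ≤ ε) (e₀ : E) (c : E → ℝ) :
    ∃ a : ℝ,
      {x : ℝ | x ∈ Set.Icc (0 : ℝ) 1 ∧
          EventZero src tgt cap bdg ε e₀ (Function.update c e₀ x)} ⊆
        Set.Icc a (a + ε) := by
  set S := {x : ℝ | x ∈ Set.Icc (0 : ℝ) 1 ∧
    EventZero src tgt cap bdg ε e₀ (Function.update c e₀ x)}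
  have hS : Bornology.IsBounded S := Metric.isBounded_Icc (0 : ℝ) 1 |>.subset fun _ hx ↦ hx.1
  have hdiam : Metric.diam S ≤ ε := Metric.diam_le_of_forall_dist_le hε fun x hx y hy ↦
    abs_sub_le_iff.2 ⟨hy.2.sub_le hε hx.2, hx.2.sub_le hε hy.2⟩
  rw [Real.diam_eq hS] at hdiam
  refine ⟨sInf S, hS.subset_Icc_sInf_sSup.trans (Set.Icc_subset_Icc le_rfl ?_)⟩
  linarith

/-- Fixing all costs except that of the edge `e₀`, the set of values of `c e₀` in
`[0,1]` for which the event `E_ε^{e₀}` occurs is contained in an interval of length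
at most `ε`. -/
theorem eventZero_interval
    {V E : Type} [Fintype V] [Fintype E] [DecidableEq V] [DecidableEq E]
    (src tgt : E → V) (cap : E → ℕ) (bdg : V → ℤ)
    (ε : ℝ) (hε : 0 ≤ ε) (e₀ : E) (c : E → ℝ) :
    ∃ a : ℝ,
      {x : ℝ | x ∈ Set.Icc (0 : ℝ) 1 ∧
          EventZero src tgt cap bdg ε e₀ (Function.update c e₀ x)} ⊆
        Set.Icc a (a + ε) :=
  eventZero_interval_general src tgt cap bdg ε hε e₀ c
end

section
/- Consider a min-cost flow instance with cost vector c ∈ ℝ^E such that the min-cost feasible integer flow f* is unique, and let ε ≥ 0. Assume that for every edge e ∈ E neither the event E_ε^e nor the event E'_ε^e occurs. Then every feasible integer flow f̂ with f̂ ≠ f* satisfies c·f̂ ≥ c·f* + ε. -/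
open MeasureTheory

namespace SecondBest

set_option linter.unusedSectionVars false

variable {V E : Type} [Fintype V] [Fintype E] [DecidableEq V]

/-- Excess of a vector at a vertex. -/
def excess (src tgt : E → V) (d : E → ℤ) (v : V) : ℤ :=
  (∑ e, if src e = v then d e else 0) - (∑ e, if tgt e = v then d e else 0)

lemma excess_add (src tgt : E → V) (f g : E → ℤ) (v : V) :
    excess src tgt (fun e => f e + g e) v = excess src tgt f v + excess src tgt g v := by
  unfold excess
  have h1 : (∑ e, if src e = v then f e + g e else 0)
      = (∑ e, if src e = v then f e else 0) + (∑ e, if src e = v then g e else 0) := by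
    rw [← Finset.sum_add_distrib]
    exact Finset.sum_congr rfl (fun e _ => by split <;> ring)
  have h2 : (∑ e, if tgt e = v then f e + g e else 0)
      = (∑ e, if tgt e = v then f e else 0) + (∑ e, if tgt e = v then g e else 0) := by
    rw [← Finset.sum_add_distrib]
    exact Finset.sum_congr rfl (fun e _ => by split <;> ring)
  rw [h1, h2]; ring

lemma excess_sub (src tgt : E → V) (f g : E → ℤ) (v : V) :
    excess src tgt (fun e => f e - g e) v = excess src tgt f v - excess src tgt g v := by
  unfold excess
  have h1 : (∑ e, if src e = v then f e - g e else 0)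
      = (∑ e, if src e = v then f e else 0) - (∑ e, if src e = v then g e else 0) := by
    rw [← Finset.sum_sub_distrib]
    exact Finset.sum_congr rfl (fun e _ => by split <;> ring)
  have h2 : (∑ e, if tgt e = v then f e - g e else 0)
      = (∑ e, if tgt e = v then f e else 0) - (∑ e, if tgt e = v then g e else 0) := by
    rw [← Finset.sum_sub_distrib]
    exact Finset.sum_congr rfl (fun e _ => by split <;> ring)
  rw [h1, h2]; ring

/-- Residual step relation. -/
def Step (src tgt : E → V) (d : E → ℤ) (a b : V) : Prop :=
  ∃ e, (src e = a ∧ tgt e = b ∧ 0 < d e) ∨ (src e = b ∧ tgt e = a ∧ d e < 0)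

lemma step_succ (src tgt : E → V) (d : E → ℤ)
    (hd : ∀ v, excess src tgt d v = 0)
    {u v : V} (h : Step src tgt d u v) : ∃ w, Step src tgt d v w := by
  by_contra hcon
  push_neg at hcon
  have hout : ∀ e, src e = v → d e ≤ 0 := by
    intro e he
    by_contra h'
    push_neg at h'
    exact hcon (tgt e) ⟨e, Or.inl ⟨he, rfl, h'⟩⟩
  have hin : ∀ e, tgt e = v → 0 ≤ d e := by
    intro e he
    by_contra h'
    push_neg at h'
    exact hcon (src e) ⟨e, Or.inr ⟨rfl, he, h'⟩⟩
  have h1 : (∑ e, if src e = v then d e else 0) ≤ 0 :=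
    Finset.sum_nonpos (fun e _ => by split <;> [exact hout e ‹_›; rfl])
  have h2 : (0:ℤ) ≤ (∑ e, if tgt e = v then d e else 0) :=
    Finset.sum_nonneg (fun e _ => by split <;> [exact hin e ‹_›; rfl])
  have hz := hd v
  unfold excess at hz
  have hs1 : (∑ e, if src e = v then d e else 0) = 0 := by omega
  have hs2 : (∑ e, if tgt e = v then d e else 0) = 0 := by omega
  have hsrc0 : ∀ e, src e = v → d e = 0 := by
    intro e he
    have := (Finset.sum_eq_zero_iff_of_nonpos
      (fun e (_ : e ∈ Finset.univ) => by split <;> [exact hout e ‹_›; rfl])).1 hs1 e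
      (Finset.mem_univ e)
    simpa [he] using this
  have htgt0 : ∀ e, tgt e = v → d e = 0 := by
    intro e he
    have := (Finset.sum_eq_zero_iff_of_nonneg
      (fun e (_ : e ∈ Finset.univ) => by split <;> [exact hin e ‹_›; rfl])).1 hs2 e
      (Finset.mem_univ e)
    simpa [he] using this
  obtain ⟨e, he⟩ := h
  rcases he with ⟨_, h2', h3⟩ | ⟨h1', _, h3⟩
  · have := htgt0 e h2'; omega
  · have := hsrc0 e h1'; omega

/-- From a nonzero circulation extract a conforming unit circulation. -/
lemma exists_unit_circulation (src tgt : E → V) (d : E → ℤ)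
    (hd : ∀ v, excess src tgt d v = 0) (hne : d ≠ 0) :
    ∃ γ : E → ℤ, (∀ v, excess src tgt γ v = 0) ∧ γ ≠ 0 ∧
      ∀ e, γ e = 0 ∨ (γ e = 1 ∧ 0 < d e) ∨ (γ e = -1 ∧ d e < 0) := by
  classical
  -- start vertex with an incoming residual edge
  have hstart : ∃ b, ∃ a, Step src tgt d a b := by
    obtain ⟨e0, he0⟩ := Function.ne_iff.1 hne
    simp only [Pi.zero_apply] at he0
    rcases lt_or_gt_of_ne he0 with h | h
    · exact ⟨src e0, tgt e0, ⟨e0, Or.inr ⟨rfl, rfl, h⟩⟩⟩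
    · exact ⟨tgt e0, src e0, ⟨e0, Or.inl ⟨rfl, rfl, h⟩⟩⟩
  set P : V → Prop := fun v => ∃ a, Step src tgt d a v with hP
  obtain ⟨b0, hb0⟩ := hstart
  -- successor function
  have next : ∀ p : {v // P v}, {w : {v // P v} // Step src tgt d p.1 w.1} := by
    intro p
    have h := step_succ src tgt d hd (Classical.choose_spec p.2)
    exact ⟨⟨Classical.choose h, ⟨p.1, Classical.choose_spec h⟩⟩, Classical.choose_spec h⟩
  let nxt : {v // P v} → {v // P v} := fun p => (next p).1
  let walk : ℕ → {v // P v} := fun n => nxt^[n] ⟨b0, hb0⟩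
  let u : ℕ → V := fun n => (walk n).1
  have hstep : ∀ n, Step src tgt d (u n) (u (n+1)) := by
    intro n
    have : walk (n+1) = nxt (walk n) := Function.iterate_succ_apply' nxt n _
    show Step src tgt d (walk n).1 (walk (n+1)).1
    rw [this]
    exact (next (walk n)).2
  -- find repetition with minimal gap
  obtain ⟨m, n, hmn, hum⟩ := Finite.exists_ne_map_eq_of_infinite u
  have hQ : ∃ k, ∃ i, u i = u (i + k + 1) := by
    rcases Nat.lt_or_ge m n with h | h
    · exact ⟨n - m - 1, m, by rw [hum]; congr 1; omega⟩
    · have h' : n < m := by omega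
      exact ⟨m - n - 1, n, by rw [← hum]; congr 1; omega⟩
  -- minimal gap
  set k := Nat.find hQ with hk
  obtain ⟨i, hcyc⟩ := Nat.find_spec hQ
  set L := k + 1 with hL
  set j := i + L with hj
  have huinj : ∀ a b, i ≤ a → a < b → b < j → u a ≠ u b := by
    intro a b ha hab hb hcontra
    have : ∃ i', u i' = u (i' + (b - a - 1) + 1) := ⟨a, by rw [hcontra]; congr 1; omega⟩
    have := Nat.find_min hQ (m := b - a - 1) (by omega) this
    exact this
  -- choose edges along the walk
  have hsel : ∀ n : ℕ, ∃ e, (src e = u n ∧ tgt e = u (n+1) ∧ 0 < d e) ∨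
      (src e = u (n+1) ∧ tgt e = u n ∧ d e < 0) := fun n => hstep n
  choose en hen using hsel
  set s : ℕ → ℤ := fun n => if 0 < d (en n) then 1 else -1 with hs
  have hs1 : ∀ n, 0 < d (en n) → s n = 1 := fun n h => if_pos h
  have hs2 : ∀ n, d (en n) < 0 → s n = -1 := fun n h => if_neg (by omega)
  set γ : E → ℤ := fun e => ∑ n ∈ Finset.Ico i j, if en n = e then s n else 0 with hγ
  -- edges along the cycle are distinct
  have hedist : ∀ a b, a ∈ Finset.Ico i j → b ∈ Finset.Ico i j → a ≠ b → en a ≠ en b := by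
    intro a b ha hb hab hcontra
    simp only [Finset.mem_Ico] at ha hb
    rcases hen a with ⟨ha1, ha2, ha3⟩ | ⟨ha1, ha2, ha3⟩ <;>
      rcases hen b with ⟨hb1, hb2, hb3⟩ | ⟨hb1, hb2, hb3⟩
    · have : u a = u b := by rw [← ha1, ← hb1, hcontra]
      rcases Nat.lt_or_ge a b with h | h
      · exact huinj a b ha.1 h hb.2 this
      · exact huinj b a hb.1 (by omega) ha.2 this.symm
    · rw [hcontra] at ha3; omega
    · rw [hcontra] at ha3; omega
    · have : u a = u b := by rw [← ha2, ← hb2, hcontra]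
      rcases Nat.lt_or_ge a b with h | h
      · exact huinj a b ha.1 h hb.2 this
      · exact huinj b a hb.1 (by omega) ha.2 this.symm
  -- value of γ on a cycle edge
  have hγval : ∀ n ∈ Finset.Ico i j, γ (en n) = s n := by
    intro n hn
    rw [hγ]
    refine Finset.sum_eq_single_of_mem n hn (fun b hb hbn => ?_) |>.trans (by simp)
    simp [hedist b n hb hn hbn]
  refine ⟨γ, ?_, ?_, ?_⟩
  · -- circulation
    intro w
    unfold excess
    have key : ∀ (p : E → V), (∑ e, if p e = w then γ e else 0)
        = ∑ n ∈ Finset.Ico i j, (if p (en n) = w then s n else 0) := by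
      intro p
      have hswap : ∀ e, (if p e = w then γ e else 0)
          = ∑ n ∈ Finset.Ico i j, (if en n = e then (if p e = w then s n else 0) else 0) := by
        intro e
        rw [hγ]
        by_cases h : p e = w
        · simp [h]
        · simp [h]
      rw [Finset.sum_congr rfl (fun e _ => hswap e), Finset.sum_comm]
      refine Finset.sum_congr rfl fun n _ => ?_
      rw [Finset.sum_ite_eq]
      simp
    rw [key src, key tgt, ← Finset.sum_sub_distrib]
    have hterm : ∀ n, ((if src (en n) = w then s n else 0) - (if tgt (en n) = w then s n else 0))
        = (if u n = w then (1:ℤ) else 0) - (if u (n+1) = w then 1 else 0) := by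
      intro n
      rcases hen n with ⟨h1, h2, h3⟩ | ⟨h1, h2, h3⟩
      · rw [hs1 n h3, h1, h2]
      · rw [hs2 n h3, h1, h2]; split_ifs <;> ring
    rw [Finset.sum_congr rfl (fun n _ => hterm n), Finset.sum_Ico_eq_sum_range]
    have : ∀ r : ℕ, (if u (i + r) = w then (1:ℤ) else 0) - (if u (i + r + 1) = w then 1 else 0)
        = (fun r => if u (i + r) = w then (1:ℤ) else 0) r
          - (fun r => if u (i + r) = w then (1:ℤ) else 0) (r + 1) := by
      intro r; rfl
    rw [Finset.sum_congr rfl (fun r _ => this r), Finset.sum_range_sub']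
    have e1 : i + (j - i) = i + k + 1 := by omega
    have e2 : i + 0 = i := by omega
    simp only [e1, e2]
    rw [← hcyc, sub_self]
  · -- nonzero
    have hi : i ∈ Finset.Ico i j := Finset.mem_Ico.2 ⟨le_refl i, by omega⟩
    have h := hγval i hi
    intro hcon
    rw [hcon] at h
    simp only [Pi.zero_apply] at h
    rcases hen i with ⟨_, _, h3⟩ | ⟨_, _, h3⟩
    · rw [hs1 i h3] at h; omega
    · rw [hs2 i h3] at h; omega
  · -- conforming
    intro e
    by_cases hc : ∃ n ∈ Finset.Ico i j, en n = e
    · obtain ⟨n, hn, hne'⟩ := hc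
      subst hne'
      rw [hγval n hn]
      rcases hen n with ⟨_, _, h3⟩ | ⟨_, _, h3⟩
      · right; left; exact ⟨hs1 n h3, h3⟩
      · right; right; exact ⟨hs2 n h3, h3⟩
    · left
      push_neg at hc
      rw [hγ]
      exact Finset.sum_eq_zero (fun n hn => by rw [if_neg (hc n hn)])

end SecondBest

section MainProof
open SecondBest

private lemma flowCost_add' {E : Type} [Fintype E] (c : E → ℝ) (f g : E → ℤ) :
    flowCost c (fun e => f e + g e) = flowCost c f + flowCost c g := by
  unfold flowCost
  rw [← Finset.sum_add_distrib]
  exact Finset.sum_congr rfl fun e _ => by push_cast; ring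

private lemma flowCost_sub' {E : Type} [Fintype E] (c : E → ℝ) (f g : E → ℤ) :
    flowCost c (fun e => f e - g e) = flowCost c f - flowCost c g := by
  unfold flowCost
  rw [← Finset.sum_sub_distrib]
  exact Finset.sum_congr rfl fun e _ => by push_cast; ring

end MainProof

/-- If the min-cost flow `f*` is unique and for every edge `e` neither `E_ε^e` nor
`E'_ε^e` occurs, then every feasible integer flow `f̂ ≠ f*` satisfies
`c·f̂ ≥ c·f* + ε`. -/
theorem second_best_gap
    {V E : Type} [Fintype V] [Fintype E] [DecidableEq V]
    (src tgt : E → V) (cap : E → ℕ) (bdg : V → ℤ)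
    (c : E → ℝ) (ε : ℝ) (hε : 0 ≤ ε)
    (fstar : E → ℤ)
    (hfeas : IsFlow src tgt cap bdg fstar)
    (hunique : ∀ f, IsFlow src tgt cap bdg f → f ≠ fstar → flowCost c fstar < flowCost c f)
    (hno : ∀ e : E, ¬ EventZero src tgt cap bdg ε e c ∧ ¬ EventCap src tgt cap bdg ε e c) :
    ∀ fhat : E → ℤ, IsFlow src tgt cap bdg fhat → fhat ≠ fstar →
      flowCost c fstar + ε ≤ flowCost c fhat := by
  classical
  intro fhat hhat hnefh
  by_contra hlt
  push_neg at hlt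
  have hopt : ∀ f, IsFlow src tgt cap bdg f → flowCost c fstar ≤ flowCost c f := by
    intro f hf
    by_cases h : f = fstar
    · rw [h]
    · exact (hunique f hf h).le
  set d : E → ℤ := fun e => fhat e - fstar e with hdd
  have hdcirc : ∀ v, SecondBest.excess src tgt d v = 0 := by
    intro v
    have h1 : SecondBest.excess src tgt fhat v = bdg v := hhat.2 v
    have h2 : SecondBest.excess src tgt fstar v = bdg v := hfeas.2 v
    have := SecondBest.excess_sub src tgt fhat fstar v
    rw [h1, h2] at this
    rw [hdd]
    omega
  have hdne : d ≠ 0 := by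
    intro h
    apply hnefh
    funext e
    have := congrFun h e
    simp only [hdd, Pi.zero_apply] at this
    omega
  obtain ⟨γ, hγcirc, hγne, hγconf⟩ :=
    SecondBest.exists_unit_circulation src tgt d hdcirc hdne
  obtain ⟨e0, he0⟩ := Function.ne_iff.1 hγne
  simp only [Pi.zero_apply] at he0
  -- g1 = fstar + γ is feasible
  have hg1 : IsFlow src tgt cap bdg (fun e => fstar e + γ e) := by
    constructor
    · intro e
      have hb1 := hfeas.1 e
      have hb2 := hhat.1 e
      rcases hγconf e with h | ⟨h, hd'⟩ | ⟨h, hd'⟩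
      · simp only [h]; omega
      · simp only [hdd] at hd'; simp only; omega
      · simp only [hdd] at hd'; simp only; omega
    · intro v
      have h1 : SecondBest.excess src tgt fstar v = bdg v := hfeas.2 v
      have h2 := SecondBest.excess_add src tgt fstar γ v
      have h3 := hγcirc v
      show SecondBest.excess src tgt (fun e => fstar e + γ e) v = bdg v
      omega
  have hg1ne : (fun e => fstar e + γ e) ≠ fstar := by
    intro h
    have := congrFun h e0
    omega
  -- g2 = fhat - γ is feasible
  have hg2 : IsFlow src tgt cap bdg (fun e => fhat e - γ e) := by
    constructor
    · intro e
      have hb1 := hfeas.1 e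
      have hb2 := hhat.1 e
      rcases hγconf e with h | ⟨h, hd'⟩ | ⟨h, hd'⟩
      · simp only [h]; omega
      · simp only [hdd] at hd'; simp only; omega
      · simp only [hdd] at hd'; simp only; omega
    · intro v
      have h1 : SecondBest.excess src tgt fhat v = bdg v := hhat.2 v
      have h2 := SecondBest.excess_sub src tgt fhat γ v
      have h3 := hγcirc v
      show SecondBest.excess src tgt (fun e => fhat e - γ e) v = bdg v
      omega
  -- cost of γ
  have hc1 : flowCost c (fun e => fstar e + γ e) = flowCost c fstar + flowCost c γ :=
    flowCost_add' c fstar γ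
  have hc2 : flowCost c (fun e => fhat e - γ e) = flowCost c fhat - flowCost c γ :=
    flowCost_sub' c fhat γ
  have hcγsmall : flowCost c γ < ε := by
    have := hopt _ hg2
    rw [hc2] at this
    linarith
  have hcγpos : 0 < flowCost c γ := by
    have := hunique _ hg1 hg1ne
    rw [hc1] at this
    linarith
  -- no events: derive strict interiority of fstar on the support of γ
  have hlow : ∀ e, γ e = 1 → 1 ≤ fstar e := by
    intro e h1
    by_contra hcon
    have h0 : fstar e = 0 := by have := (hfeas.1 e).1; omega
    refine (hno e).1 ⟨fstar, (fun e => fstar e + γ e), hfeas, hg1, Ne.symm hg1ne, hopt, ?_, h0, ?_⟩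
    · rw [hc1]; linarith
    · simp only; omega
  have hhigh : ∀ e, γ e = -1 → fstar e ≤ (cap e : ℤ) - 1 := by
    intro e h1
    by_contra hcon
    have h0 : fstar e = (cap e : ℤ) := by have := (hfeas.1 e).2; omega
    refine (hno e).2 ⟨fstar, (fun e => fstar e + γ e), hfeas, hg1, Ne.symm hg1ne, hopt, ?_, h0, ?_⟩
    · rw [hc1]; linarith
    · simp only; omega
  -- g3 = fstar - γ is feasible, contradicting optimality
  have hg3 : IsFlow src tgt cap bdg (fun e => fstar e - γ e) := by
    constructor
    · intro e
      have hb1 := hfeas.1 e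
      rcases hγconf e with h | ⟨h, hd⟩ | ⟨h, hd⟩
      · simp only [h]; omega
      · have := hlow e h; simp only; omega
      · have := hhigh e h; simp only; omega
    · intro v
      have h1 : SecondBest.excess src tgt fstar v = bdg v := hfeas.2 v
      have h2 := SecondBest.excess_sub src tgt fstar γ v
      have h3 := hγcirc v
      show SecondBest.excess src tgt (fun e => fstar e - γ e) v = bdg v
      omega
  have hg3ne : (fun e => fstar e - γ e) ≠ fstar := by
    intro h
    have := congrFun h e0
    omega
  have := hunique _ hg3 hg3ne
  rw [flowCost_sub' c fstar γ] at this
  linarith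
end
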